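/- Let V ∈ L^∞(ℝ;ℝ) with |V(x)| → 0 as |x| → ∞, and for β > 0 and j ∈ ℕ define μ_j(β) = inf over all j-dimensional subspaces U ⊂ H¹(ℝ) of sup_{u ∈ U, u ≠ 0} ⟨Vu,u⟩_{L²} / (‖u′‖²_{L²} + β‖u‖²_{L²}). Fix j ∈ ℕ such that μ_j(β) < 0 for some (equivalently, all) β > 0. Then the function β ↦ μ_j(β) is strictly increasing on (0,∞): for 0 < β < β₁ one has μ_j(β) < μ_j(β₁) < 0. -/

import Mathlib

open MeasureTheory Filter Set
open scoped ENNReal Topology BigOperators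

noncomputable section

/-- `g` is the weak derivative of `f : ℝ → ℂ`. -/
def HasWeakDeriv (f g : ℝ → ℂ) : Prop :=
  ∀ χ : ℝ → ℂ, ContDiff ℝ (⊤ : ℕ∞) χ → HasCompactSupport χ →
    ∫ x : ℝ, f x * deriv χ x = - ∫ x : ℝ, g x * χ x

/-- `f ∈ H¹(ℝ;ℂ)` with weak derivative `f'`. -/
def MemH1 (f f' : ℝ → ℂ) : Prop :=
  MemLp f 2 (volume : Measure ℝ) ∧ MemLp f' 2 (volume : Measure ℝ) ∧ HasWeakDeriv f f'

/-- The Rayleigh-type quotient `⟨Vu,u⟩_{L²} / (‖u'‖_{L²}² + β‖u‖_{L²}²)`. -/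
def rayleigh (V : ℝ → ℝ) (β : ℝ) (u u' : ℝ → ℂ) : ℝ :=
  (∫ x : ℝ, V x * ‖u x‖ ^ 2) /
    ((eLpNorm u' 2 (volume : Measure ℝ)).toReal ^ 2 +
      β * (eLpNorm u 2 (volume : Measure ℝ)).toReal ^ 2)

/-- The set of values `sup_{u ∈ U \ {0}} ⟨Vu,u⟩/(‖u'‖² + β‖u‖²)` over all
`j`-dimensional subspaces `U ⊂ H¹(ℝ)` (encoded by `j` linearly independent
functions in `H¹`). -/
def muSet (V : ℝ → ℝ) (β : ℝ) (j : ℕ) : Set ℝ :=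
  { m | ∃ f f' : Fin j → ℝ → ℂ,
      (∀ i, MemH1 (f i) (f' i)) ∧
      (∀ c : Fin j → ℂ, (fun x => ∑ i, c i * f i x) =ᵐ[volume] (0 : ℝ → ℂ) → c = 0) ∧
      m = ⨆ c : {c : Fin j → ℂ // c ≠ 0},
            rayleigh V β (fun x => ∑ i, (c : Fin j → ℂ) i * f i x)
              (fun x => ∑ i, (c : Fin j → ℂ) i * f' i x) }

/-- The min-max value `μ_j(β)`. -/
def muMinMax (V : ℝ → ℝ) (j : ℕ) (β : ℝ) : ℝ := sInf (muSet V β j)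

lemma rpow_two_eq (x : ℝ) : x ^ (2:ℝ) = x ^ (2:ℕ) := by
  rw [show ((2:ℝ) = ((2:ℕ):ℝ)) by norm_num, Real.rpow_natCast]

lemma Vbd {V : ℝ → ℝ} (hV : MemLp V ⊤ (volume : Measure ℝ)) :
    ∀ᵐ x : ℝ, |V x| ≤ (eLpNorm V ⊤ (volume : Measure ℝ)).toReal := by
  filter_upwards [ae_le_eLpNormEssSup (f := V) (μ := (volume : Measure ℝ))] with x hx
  have h1 : (‖V x‖₊ : ℝ≥0∞) ≤ eLpNorm V ⊤ volume := by rwa [eLpNorm_exponent_top]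
  have h2 := ENNReal.toReal_mono hV.2.ne h1
  simpa [Real.norm_eq_abs] using h2

lemma sumMem {j : ℕ} {f : Fin j → ℝ → ℂ} (hf : ∀ i, MemLp (f i) 2 (volume : Measure ℝ))
    (c : Fin j → ℂ) : MemLp (fun x => ∑ i, c i * f i x) 2 (volume : Measure ℝ) := by
  have h := memLp_finset_sum' (μ := (volume : Measure ℝ)) (p := 2) Finset.univ
    (f := fun i x => c i * f i x) (fun i _ => (hf i).const_mul (c i))
  convert h using 1
  funext x
  simp

lemma sq_int {u : ℝ → ℂ} (hu : MemLp u 2 (volume : Measure ℝ)) :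
    Integrable (fun x => ‖u x‖ ^ 2) (volume : Measure ℝ) := by
  have h := hu.integrable_norm_rpow two_ne_zero ENNReal.ofNat_ne_top
  have h2 : ENNReal.toReal 2 = (2:ℝ) := by simp
  refine h.congr (Eventually.of_forall fun x => ?_)
  simp only [h2, rpow_two_eq]

lemma sq_eq {u : ℝ → ℂ} (hu : MemLp u 2 (volume : Measure ℝ)) :
    (eLpNorm u 2 (volume : Measure ℝ)).toReal ^ 2 = ∫ x, ‖u x‖ ^ 2 := by
  rw [hu.eLpNorm_eq_integral_rpow_norm two_ne_zero ENNReal.ofNat_ne_top]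
  have h2 : ENNReal.toReal 2 = (2:ℝ) := by simp
  simp only [h2]
  have hI : (0:ℝ) ≤ ∫ x, ‖u x‖ ^ (2:ℝ) :=
    integral_nonneg fun x => Real.rpow_nonneg (norm_nonneg _) _
  rw [ENNReal.toReal_ofReal (Real.rpow_nonneg hI _)]
  rw [← Real.rpow_natCast ((∫ x, ‖u x‖ ^ (2:ℝ)) ^ ((2:ℝ))⁻¹) 2, ← Real.rpow_mul hI]
  norm_num

lemma N_int {V : ℝ → ℝ} (hV : MemLp V ⊤ (volume : Measure ℝ)) {u : ℝ → ℂ}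
    (hu : MemLp u 2 (volume : Measure ℝ)) :
    Integrable (fun x => V x * ‖u x‖ ^ 2) (volume : Measure ℝ) :=
  (sq_int hu).bdd_mul hV.aestronglyMeasurable
    ((Vbd hV).mono fun x hx => by simpa [Real.norm_eq_abs] using hx)

lemma N_bd {V : ℝ → ℝ} (hV : MemLp V ⊤ (volume : Measure ℝ)) {u : ℝ → ℂ}
    (hu : MemLp u 2 (volume : Measure ℝ)) :
    |∫ x, V x * ‖u x‖ ^ 2| ≤
      (eLpNorm V ⊤ (volume : Measure ℝ)).toReal * (eLpNorm u 2 (volume : Measure ℝ)).toReal ^ 2 := by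
  set C := (eLpNorm V ⊤ (volume : Measure ℝ)).toReal with hCdef
  calc |∫ x, V x * ‖u x‖ ^ 2| ≤ ∫ x, |V x * ‖u x‖ ^ 2| := by
        simpa only [Real.norm_eq_abs] using
          norm_integral_le_integral_norm (fun x => V x * ‖u x‖ ^ 2) (μ := (volume : Measure ℝ))
    _ ≤ ∫ x, C * ‖u x‖ ^ 2 := by
        refine integral_mono_ae (N_int hV hu).abs ((sq_int hu).const_mul C) ?_
        filter_upwards [Vbd hV] with x hx
        rw [abs_mul, abs_of_nonneg (by positivity : (0:ℝ) ≤ ‖u x‖ ^ 2)]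
        exact mul_le_mul_of_nonneg_right hx (by positivity)
    _ = C * (eLpNorm u 2 (volume : Measure ℝ)).toReal ^ 2 := by
        rw [integral_const_mul, sq_eq hu]

lemma ray_abs {V : ℝ → ℝ} (hV : MemLp V ⊤ (volume : Measure ℝ)) {β : ℝ} (hβ : 0 < β)
    {u u' : ℝ → ℂ} (hu : MemLp u 2 (volume : Measure ℝ))
    (hT : 0 < (eLpNorm u 2 (volume : Measure ℝ)).toReal) :
    |rayleigh V β u u'| ≤ (eLpNorm V ⊤ (volume : Measure ℝ)).toReal / β := by
  have hC : (0:ℝ) ≤ (eLpNorm V ⊤ (volume : Measure ℝ)).toReal := ENNReal.toReal_nonneg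
  have hN := N_bd hV hu
  set C := (eLpNorm V ⊤ (volume : Measure ℝ)).toReal
  set T := (eLpNorm u 2 (volume : Measure ℝ)).toReal
  set P := (eLpNorm u' 2 (volume : Measure ℝ)).toReal ^ 2 with hPdef
  have hP : 0 ≤ P := sq_nonneg _
  have hD : 0 < P + β * T ^ 2 := by nlinarith [mul_pos hβ (pow_pos hT 2)]
  rw [rayleigh, abs_div, abs_of_pos hD, div_le_div_iff₀ hD hβ]
  nlinarith [mul_le_mul_of_nonneg_left hN hβ.le, mul_nonneg hC hP]

lemma T_pos {j : ℕ} {f : Fin j → ℝ → ℂ} (hf : ∀ i, MemLp (f i) 2 (volume : Measure ℝ))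
    (hind : ∀ c : Fin j → ℂ, (fun x => ∑ i, c i * f i x) =ᵐ[volume] (0 : ℝ → ℂ) → c = 0)
    {c : Fin j → ℂ} (hc : c ≠ 0) :
    0 < (eLpNorm (fun x => ∑ i, c i * f i x) 2 (volume : Measure ℝ)).toReal := by
  have hu := sumMem hf c
  refine ENNReal.toReal_pos (fun h0 => hc ?_) hu.eLpNorm_ne_top
  exact hind c ((eLpNorm_eq_zero_iff hu.aestronglyMeasurable two_ne_zero).mp h0)

lemma ray_up {N P Q a b : ℝ} (hQ : 0 < Q) (hP : 0 ≤ P) (ha : 0 < a) (hab : a < b)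
    (hN : N < 0) : N / (P + b * Q) ≤ (a / b) * (N / (P + a * Q)) := by
  have hb : 0 < b := ha.trans hab
  have hDa : 0 < P + a * Q := by nlinarith
  have hDb : 0 < P + b * Q := by nlinarith
  rw [div_mul_div_comm, div_le_div_iff₀ hDb (by positivity)]
  have h0 : (b - a) * (N * P) ≤ 0 :=
    mul_nonpos_of_nonneg_of_nonpos (by linarith) (mul_nonpos_of_nonpos_of_nonneg hN.le hP)
  nlinarith [h0]

lemma ray_down {N P Q a b C : ℝ} (hQ : 0 < Q) (hP : 0 ≤ P) (ha : 0 < a) (hab : a < b)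
    (hN : N < 0) (hC : 0 < C) (hNC : -N ≤ C * Q) :
    N / (P + a * Q) ≤ N / (P + b * Q) - ((b - a) / C) * (N / (P + b * Q)) ^ 2 := by
  have hb : 0 < b := ha.trans hab
  have hDa : 0 < P + a * Q := by nlinarith
  have hDb : 0 < P + b * Q := by nlinarith
  set t := N / (P + b * Q) with ht
  have htneg : t < 0 := div_neg_of_neg_of_pos hN hDb
  have hNt : N = t * (P + b * Q) := by rw [ht, div_mul_cancel₀ _ hDb.ne']
  have h1 : -t * (P + a * Q) ≤ C * Q := by
    have h2 : -t * (P + a * Q) ≤ -t * (P + b * Q) :=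
      mul_le_mul_of_nonneg_left (by nlinarith) (by linarith)
    nlinarith
  have h3 : (-t) * (-t * (P + a * Q)) ≤ (-t) * (C * Q) :=
    mul_le_mul_of_nonneg_left h1 (by linarith)
  have hknn : (0:ℝ) ≤ (b - a) / C := by
    apply div_nonneg <;> linarith
  have h4 := mul_le_mul_of_nonneg_left h3 hknn
  have h5 : ((b - a) / C) * ((-t) * (C * Q)) = (b - a) * (-t) * Q := by
    field_simp
  rw [div_le_iff₀ hDa, hNt]
  nlinarith [h4, h5]

section main
variable {V : ℝ → ℝ} {j : ℕ}

lemma nonempty_c (hj : 0 < j) : Nonempty {c : Fin j → ℂ // c ≠ 0} :=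
  ⟨⟨fun _ => 1, fun h => one_ne_zero (congrFun h ⟨0, hj⟩)⟩⟩

/-- every element of `muSet` is `≥ -C/β`, and the sup defining it is bounded with
all the per-`c` facts packaged. -/
lemma mu_facts (hV : MemLp V ⊤ (volume : Measure ℝ)) {β : ℝ} (hβ : 0 < β) {f f' : Fin j → ℝ → ℂ}
    (hf : ∀ i, MemH1 (f i) (f' i))
    (hind : ∀ c : Fin j → ℂ, (fun x => ∑ i, c i * f i x) =ᵐ[volume] (0 : ℝ → ℂ) → c = 0) :
    BddAbove (Set.range fun c : {c : Fin j → ℂ // c ≠ 0} =>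
      rayleigh V β (fun x => ∑ i, (c : Fin j → ℂ) i * f i x)
        (fun x => ∑ i, (c : Fin j → ℂ) i * f' i x)) ∧
    ∀ c : {c : Fin j → ℂ // c ≠ 0},
      |rayleigh V β (fun x => ∑ i, (c : Fin j → ℂ) i * f i x)
        (fun x => ∑ i, (c : Fin j → ℂ) i * f' i x)| ≤
          (eLpNorm V ⊤ (volume : Measure ℝ)).toReal / β := by
  have habs : ∀ c : {c : Fin j → ℂ // c ≠ 0},
      |rayleigh V β (fun x => ∑ i, (c : Fin j → ℂ) i * f i x)
        (fun x => ∑ i, (c : Fin j → ℂ) i * f' i x)| ≤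
          (eLpNorm V ⊤ (volume : Measure ℝ)).toReal / β := by
    rintro ⟨c, hc⟩
    exact ray_abs hV hβ (sumMem (fun i => (hf i).1) c)
      (T_pos (fun i => (hf i).1) hind hc)
  exact ⟨⟨_, forall_mem_range.mpr fun c => (abs_le.mp (habs c)).2⟩, habs⟩

lemma mu_mem_lb (hV : MemLp V ⊤ (volume : Measure ℝ)) (hj : 0 < j) {β : ℝ} (hβ : 0 < β) {m : ℝ} (hm : m ∈ muSet V β j) :
    -((eLpNorm V ⊤ (volume : Measure ℝ)).toReal / β) ≤ m := by
  obtain ⟨f, f', hf, hind, rfl⟩ := hm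
  haveI := nonempty_c hj
  obtain ⟨hbdd, habs⟩ := mu_facts hV hβ hf hind
  obtain ⟨c⟩ := nonempty_c (j := j) hj
  exact le_trans (abs_le.mp (habs c)).1 (le_ciSup hbdd c)

lemma bddBelow_muSet (hV : MemLp V ⊤ (volume : Measure ℝ)) (hj : 0 < j) {β : ℝ} (hβ : 0 < β) : BddBelow (muSet V β j) :=
  ⟨_, fun _ hm => mu_mem_lb hV hj hβ hm⟩

lemma mu_step (hV : MemLp V ⊤ (volume : Measure ℝ)) (hj : 0 < j) {a b : ℝ}
    (ha : 0 < a) (hab : a < b) {m : ℝ} (hm : m ∈ muSet V b j) (hmneg : m < 0) :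
    0 < (eLpNorm V ⊤ (volume : Measure ℝ)).toReal ∧
    ∃ m' ∈ muSet V a j,
      m' ≤ m - ((b - a) / (eLpNorm V ⊤ (volume : Measure ℝ)).toReal) * m ^ 2 := by
  obtain ⟨f, f', hf, hind, rfl⟩ := hm
  haveI := nonempty_c (j := j) hj
  have hb : 0 < b := ha.trans hab
  obtain ⟨hbddb, habsb⟩ := mu_facts hV hb hf hind
  set C := (eLpNorm V ⊤ (volume : Measure ℝ)).toReal with hCdef
  set S := ⨆ c : {c : Fin j → ℂ // c ≠ 0},
      rayleigh V b (fun x => ∑ i, (c : Fin j → ℂ) i * f i x)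
        (fun x => ∑ i, (c : Fin j → ℂ) i * f' i x) with hSdef
  have hFle : ∀ c : {c : Fin j → ℂ // c ≠ 0},
      rayleigh V b (fun x => ∑ i, (c : Fin j → ℂ) i * f i x)
        (fun x => ∑ i, (c : Fin j → ℂ) i * f' i x) ≤ S := fun c => le_ciSup hbddb c
  obtain ⟨c₀⟩ := nonempty_c (j := j) hj
  have hCb : -(C / b) ≤ S := le_trans (abs_le.mp (habsb c₀)).1 (hFle c₀)
  have hCpos : 0 < C := by
    rcases (ENNReal.toReal_nonneg (a := eLpNorm V ⊤ (volume : Measure ℝ))).lt_or_eq with h | h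
    · exact h
    · exfalso; rw [← hCdef] at h; rw [← h] at hCb; simp at hCb; linarith
  refine ⟨hCpos, ⟨_, ⟨f, f', hf, hind, rfl⟩, ?_⟩⟩
  refine ciSup_le fun c => ?_
  have hu := sumMem (fun i => (hf i).1) (c : Fin j → ℂ)
  have hT := T_pos (fun i => (hf i).1) hind c.2
  have hN := N_bd hV hu
  have hFcb := hFle c
  have hFneg : rayleigh V b (fun x => ∑ i, (c : Fin j → ℂ) i * f i x)
      (fun x => ∑ i, (c : Fin j → ℂ) i * f' i x) < 0 := lt_of_le_of_lt hFcb hmneg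
  set N := ∫ x, V x * ‖∑ i, (c : Fin j → ℂ) i * f i x‖ ^ 2 with hNdef
  set P := (eLpNorm (fun x => ∑ i, (c : Fin j → ℂ) i * f' i x) 2 (volume : Measure ℝ)).toReal ^ 2
    with hPdef
  set Q := (eLpNorm (fun x => ∑ i, (c : Fin j → ℂ) i * f i x) 2 (volume : Measure ℝ)).toReal ^ 2
    with hQdef
  have hQ : 0 < Q := pow_pos hT 2
  have hP : 0 ≤ P := sq_nonneg _
  have hDb : 0 < P + b * Q := by nlinarith
  have hray_b : rayleigh V b (fun x => ∑ i, (c : Fin j → ℂ) i * f i x)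
      (fun x => ∑ i, (c : Fin j → ℂ) i * f' i x) = N / (P + b * Q) := rfl
  have hray_a : rayleigh V a (fun x => ∑ i, (c : Fin j → ℂ) i * f i x)
      (fun x => ∑ i, (c : Fin j → ℂ) i * f' i x) = N / (P + a * Q) := rfl
  have hNneg : N < 0 := by
    by_contra h
    push_neg at h
    rw [hray_b] at hFneg
    exact absurd (div_nonneg h hDb.le) (not_le.mpr hFneg)
  have hdown := ray_down hQ hP ha hab hNneg hCpos (le_trans (neg_le_abs N) hN)
  rw [hray_a, hray_b] at *
  set F := N / (P + b * Q) with hFdef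
  have hknn : (0:ℝ) ≤ (b - a) / C := div_nonneg (by linarith) hCpos.le
  have hFcb' : F ≤ S := hFcb
  have hFneg' : F < 0 := hFneg
  have hmono : F - (b - a) / C * F ^ 2 ≤ S - (b - a) / C * S ^ 2 := by
    nlinarith [mul_nonneg hknn (mul_nonneg (sub_nonneg.2 hFcb')
      (neg_nonneg.2 (by linarith : S + F ≤ 0)))]
  calc N / (P + a * Q) ≤ F - (b - a) / C * F ^ 2 := hdown
    _ ≤ S - (b - a) / C * S ^ 2 := hmono

lemma mu_up (hV : MemLp V ⊤ (volume : Measure ℝ)) (hj : 0 < j) {a b : ℝ}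
    (ha : 0 < a) (hab : a < b) {m : ℝ} (hm : m ∈ muSet V a j) (hmneg : m < 0) :
    ∃ m' ∈ muSet V b j, m' ≤ (a / b) * m := by
  obtain ⟨f, f', hf, hind, rfl⟩ := hm
  haveI := nonempty_c (j := j) hj
  have hb : 0 < b := ha.trans hab
  obtain ⟨hbdda, habsa⟩ := mu_facts hV ha hf hind
  set S := ⨆ c : {c : Fin j → ℂ // c ≠ 0},
      rayleigh V a (fun x => ∑ i, (c : Fin j → ℂ) i * f i x)
        (fun x => ∑ i, (c : Fin j → ℂ) i * f' i x) with hSdef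
  have hFle : ∀ c : {c : Fin j → ℂ // c ≠ 0},
      rayleigh V a (fun x => ∑ i, (c : Fin j → ℂ) i * f i x)
        (fun x => ∑ i, (c : Fin j → ℂ) i * f' i x) ≤ S := fun c => le_ciSup hbdda c
  refine ⟨_, ⟨f, f', hf, hind, rfl⟩, ?_⟩
  refine ciSup_le fun c => ?_
  have hu := sumMem (fun i => (hf i).1) (c : Fin j → ℂ)
  have hT := T_pos (fun i => (hf i).1) hind c.2
  have hFcb := hFle c
  have hFneg : rayleigh V a (fun x => ∑ i, (c : Fin j → ℂ) i * f i x)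
      (fun x => ∑ i, (c : Fin j → ℂ) i * f' i x) < 0 := lt_of_le_of_lt hFcb hmneg
  set N := ∫ x, V x * ‖∑ i, (c : Fin j → ℂ) i * f i x‖ ^ 2 with hNdef
  set P := (eLpNorm (fun x => ∑ i, (c : Fin j → ℂ) i * f' i x) 2 (volume : Measure ℝ)).toReal ^ 2
    with hPdef
  set Q := (eLpNorm (fun x => ∑ i, (c : Fin j → ℂ) i * f i x) 2 (volume : Measure ℝ)).toReal ^ 2
    with hQdef
  have hQ : 0 < Q := pow_pos hT 2
  have hP : 0 ≤ P := sq_nonneg _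
  have hDa : 0 < P + a * Q := by nlinarith
  have hray_a : rayleigh V a (fun x => ∑ i, (c : Fin j → ℂ) i * f i x)
      (fun x => ∑ i, (c : Fin j → ℂ) i * f' i x) = N / (P + a * Q) := rfl
  have hray_b : rayleigh V b (fun x => ∑ i, (c : Fin j → ℂ) i * f i x)
      (fun x => ∑ i, (c : Fin j → ℂ) i * f' i x) = N / (P + b * Q) := rfl
  have hNneg : N < 0 := by
    by_contra h
    push_neg at h
    rw [hray_a] at hFneg
    exact absurd (div_nonneg h hDa.le) (not_le.mpr hFneg)
  calc rayleigh V b (fun x => ∑ i, (c : Fin j → ℂ) i * f i x)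
        (fun x => ∑ i, (c : Fin j → ℂ) i * f' i x)
      = N / (P + b * Q) := hray_b
    _ ≤ (a / b) * (N / (P + a * Q)) := ray_up hQ hP ha hab hNneg
    _ = (a / b) * (rayleigh V a (fun x => ∑ i, (c : Fin j → ℂ) i * f i x)
        (fun x => ∑ i, (c : Fin j → ℂ) i * f' i x)) := by rw [hray_a]
    _ ≤ (a / b) * S := by
        exact mul_le_mul_of_nonneg_left hFcb (div_nonneg ha.le hb.le)

/-- If `μ_j(β₀) < 0` for some `β₀ > 0`, then `β ↦ μ_j(β)` is strictly increasing on
`(0,∞)` with negative values: for `0 < β < β₁` one has `μ_j(β) < μ_j(β₁) < 0`. -/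
theorem muMinMax_strictMono
    (V : ℝ → ℝ) (hV : MemLp V ⊤ (volume : Measure ℝ))
    (hV0 : Tendsto V (cocompact ℝ) (nhds 0))
    (j : ℕ) (hneg : ∃ β₀ : ℝ, 0 < β₀ ∧ muMinMax V j β₀ < 0)
    (β β₁ : ℝ) (hβ : 0 < β) (hββ₁ : β < β₁) :
    muMinMax V j β < muMinMax V j β₁ ∧ muMinMax V j β₁ < 0 := by
  obtain ⟨β₀, hβ₀, hμ0⟩ := hneg
  have hβ₁ : 0 < β₁ := hβ.trans hββ₁
  have hj : 0 < j := by
    rcases Nat.eq_zero_or_pos j with rfl | hj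
    · exfalso
      haveI : IsEmpty {c : Fin 0 → ℂ // c ≠ 0} := ⟨fun c => c.2 (Subsingleton.elim _ _)⟩
      have hsub : muSet V β₀ 0 ⊆ {0} := by
        rintro m ⟨f, f', -, -, rfl⟩
        simp [Real.iSup_of_isEmpty]
      have h0 : muMinMax V 0 β₀ = 0 := by
        unfold muMinMax
        rcases subset_singleton_iff_eq.mp hsub with h | h
        · rw [h]; exact Real.sInf_empty
        · rw [h]; exact csInf_singleton 0
      linarith
    · exact hj
  have hne0 : (muSet V β₀ j).Nonempty := by
    by_contra h
    rw [not_nonempty_iff_eq_empty] at h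
    unfold muMinMax at hμ0
    rw [h, Real.sInf_empty] at hμ0
    linarith
  obtain ⟨m₀, hm₀, hm₀neg⟩ : ∃ m ∈ muSet V β₀ j, m < 0 := by
    by_contra h
    push_neg at h
    have := le_csInf hne0 h
    unfold muMinMax at hμ0
    linarith
  obtain ⟨m₁, hm₁, hm₁neg⟩ : ∃ m ∈ muSet V β₁ j, m < 0 := by
    rcases lt_trichotomy β₀ β₁ with h | h | h
    · obtain ⟨m', hm', hle⟩ := mu_up hV hj hβ₀ h hm₀ hm₀neg
      exact ⟨m', hm', lt_of_le_of_lt hle (mul_neg_of_pos_of_neg (div_pos hβ₀ hβ₁) hm₀neg)⟩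
    · exact ⟨m₀, h ▸ hm₀, hm₀neg⟩
    · obtain ⟨hC, m', hm', hle⟩ := mu_step hV hj hβ₁ h hm₀ hm₀neg
      refine ⟨m', hm', lt_of_le_of_lt hle ?_⟩
      have h2 : 0 ≤ (β₀ - β₁) / (eLpNorm V ⊤ (volume : Measure ℝ)).toReal * m₀ ^ 2 :=
        mul_nonneg (div_nonneg (by linarith) hC.le) (sq_nonneg _)
      linarith
  have hne1 : (muSet V β₁ j).Nonempty := ⟨m₁, hm₁⟩
  have hμ1neg : muMinMax V j β₁ < 0 :=
    lt_of_le_of_lt (csInf_le (bddBelow_muSet hV hj hβ₁) hm₁) hm₁neg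
  refine ⟨?_, hμ1neg⟩
  obtain ⟨hCpos, -⟩ := mu_step hV hj hβ hββ₁ hm₁ hm₁neg
  set C := (eLpNorm V ⊤ (volume : Measure ℝ)).toReal with hCdef
  set μ₁ := muMinMax V j β₁ with hμdef
  set k := (β₁ - β) / C with hkdef
  have hk : 0 < k := div_pos (by linarith) hCpos
  have hμ1 : μ₁ < 0 := hμ1neg
  have hμ1sq : 0 < μ₁ ^ 2 := pow_two_pos_of_ne_zero (ne_of_lt hμ1)
  set ε := min (k * μ₁ ^ 2 / 8) (-μ₁ / 2) with hεdef
  have hε : 0 < ε := lt_min (by positivity) (by linarith)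
  obtain ⟨m, hm, hmlt⟩ := Real.lt_sInf_add_pos hne1 hε
  have hmlt' : m < μ₁ + ε := hmlt
  have hε2 : ε ≤ -μ₁ / 2 := min_le_right _ _
  have hmneg : m < 0 := by linarith
  obtain ⟨-, m', hm', hle⟩ := mu_step hV hj hβ hββ₁ hm hmneg
  rw [← hCdef, ← hkdef] at hle
  have hμβ : muMinMax V j β ≤ m' := csInf_le (bddBelow_muSet hV hj hβ) hm'
  have hm2 : m ≤ μ₁ / 2 := by linarith
  have hmsq : μ₁ ^ 2 / 4 ≤ m ^ 2 := by
    nlinarith [mul_nonneg (by linarith : (0:ℝ) ≤ μ₁ / 2 - m) (by linarith : (0:ℝ) ≤ -(m + μ₁ / 2))]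
  have hε1 : ε ≤ k * μ₁ ^ 2 / 8 := min_le_left _ _
  calc muMinMax V j β ≤ m' := hμβ
    _ ≤ m - k * m ^ 2 := hle
    _ < μ₁ := by nlinarith [mul_le_mul_of_nonneg_left hmsq hk.le]
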